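/- arXiv:math/0506366 — 6 statements merged into one kernel-verified Lean document; each statement's English description precedes it below -/
import Mathlib

section
/- Let n ≥ 1 and let τ : ℂⁿ → ℝ be a C² nonnegative smoothly plurisubharmonic function such that (1/r^{2n}) · ∫_{Δ_r} τ dλ tends to 0 as r → ∞. Then τ is identically zero on ℂⁿ. -/
/-!
On every complex line `τ` restricts to a `C²` function `g` on `ℂ` with `Δg ≥ 0`. Let
`A(s) = ∫₀^{2π} g(s e^{iθ}) dθ`, so that `A'(s) = B(s) = ∫ Dg(s e^{iθ})(e^{iθ}) dθ`. Integrating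
the `θ`-derivative of the periodic function `Dg(s e^{iθ})(i s e^{iθ})` over a period gives
`s B(s) = s² ∫ D²g(s e^{iθ})(i e^{iθ}, i e^{iθ}) dθ`; adding the radial second derivative,
`s (s B)'(s) = s² ∫ Δg(s e^{iθ}) dθ ≥ 0`. Hence `B ≥ 0` on `(0, ∞)`, `A` increases, and
`2π g(0) ≤ A(s)`. Polar coordinates give `π r² g(0) ≤ ∫_{|w|<r} g`, and Fubini over the factors
of the polydisc gives `(π r²)ⁿ τ(z) ≤ ∫_{z + Δ_r} τ ≤ ∫_{Δ_{2r}} τ` when `‖z‖ ≤ r`, so that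
`(π/4)ⁿ τ(z) ≤ (2r)^{-2n} ∫_{Δ_{2r}} τ → 0`.
-/

open MeasureTheory Filter

/-- The Laplacian of a function `g : ℂ → ℝ`, where `ℂ` is regarded as a two-dimensional
real inner product space with orthonormal basis `{1, I}`. -/
noncomputable def lap2 (g : ℂ → ℝ) (w : ℂ) : ℝ :=
  iteratedFDeriv ℝ 2 g w ![1, 1] + iteratedFDeriv ℝ 2 g w ![Complex.I, Complex.I]

/-- A `C²` function `τ : ℂⁿ → ℝ` is smoothly plurisubharmonic if its restriction to every
complex line has nonnegative Laplacian. -/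
def SmoothlyPsh (n : ℕ) (τ : (Fin n → ℂ) → ℝ) : Prop :=
  ∀ a b : Fin n → ℂ, ∀ w : ℂ, 0 ≤ lap2 (fun u : ℂ => τ (a + u • b)) w

/-- The open polydisc of polyradius `(r, …, r)` in `ℂⁿ`. -/
def polydisc (n : ℕ) (r : ℝ) : Set (Fin n → ℂ) :=
  {z | ∀ j, ‖z j‖ < r}

open Metric Set Real Laplacian

theorem intervalIntegral.hasDerivAt_integral_of_continuous {E : Type*} [NormedAddCommGroup E]
    [NormedSpace ℝ E] {F F' : ℝ → ℝ → E} {a b : ℝ}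
    (hF : Continuous fun p : ℝ × ℝ => F p.1 p.2) (hF' : Continuous fun p : ℝ × ℝ => F' p.1 p.2)
    (hd : ∀ x t, HasDerivAt (F · t) (F' x t) x) (x₀ : ℝ) :
    HasDerivAt (fun x => ∫ t in a..b, F x t) (∫ t in a..b, F' x₀ t) x₀ := by
  obtain ⟨M, hM⟩ := (isCompact_closedBall x₀ 1 |>.prod isCompact_uIcc).exists_bound_of_continuousOn
    hF'.continuousOn
  have hFx : ∀ x, Continuous (F x) := fun x => hF.comp (Continuous.prodMk_right x)
  refine (hasDerivAt_integral_of_dominated_loc_of_deriv_le (bound := fun _ => M)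
    (ball_mem_nhds x₀ one_pos) (Eventually.of_forall fun x => (hFx x).aestronglyMeasurable)
    ((hFx x₀).intervalIntegrable a b)
    (hF'.comp (Continuous.prodMk_right x₀)).aestronglyMeasurable ?_ intervalIntegrable_const
    (Eventually.of_forall fun t _ x _ => hd x t)).2
  exact Eventually.of_forall fun t ht x hx =>
    hM (x, t) ⟨ball_subset_closedBall hx, uIoc_subset_uIcc ht⟩

theorem apply_zero_le_of_deriv_nonneg {f f' : ℝ → ℝ} (hf : ∀ s, HasDerivAt f (f' s) s)
    (hf' : ∀ s, 0 < s → 0 ≤ f' s) {s : ℝ} (hs : 0 ≤ s) : f 0 ≤ f s :=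
  monotoneOn_of_hasDerivWithinAt_nonneg (convex_Ici 0)
    (continuous_iff_continuousAt.2 fun x => (hf x).continuousAt).continuousOn
    (fun x _ => (hf x).hasDerivWithinAt) (fun x hx => hf' x (by simpa using hx)) self_mem_Ici hs hs

theorem hasDerivAt_circleMap_radius (c : ℂ) (R θ : ℝ) :
    HasDerivAt (circleMap c · θ) (circleMap 0 1 θ) R := by
  simpa [circleMap] using ((Complex.ofRealCLM.hasDerivAt (x := R)).mul_const
    (Complex.exp (θ * Complex.I))).const_add c

theorem circleMap_zero_eq_smul (R θ : ℝ) : circleMap 0 R θ = R • circleMap 0 1 θ := by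
  simp [circleMap, Complex.real_smul]

theorem lap2_eq_laplacian (g : ℂ → ℝ) : lap2 g = Δ g :=
  (InnerProductSpace.laplacian_eq_iteratedFDeriv_complexPlane g).symm

theorem laplacian_eq_fderiv_fderiv_rotation (g : ℂ → ℝ) (a : Circle) (w : ℂ) :
    Δ g w = fderiv ℝ (fderiv ℝ g) w a a
      + fderiv ℝ (fderiv ℝ g) w (a * Complex.I) (a * Complex.I) := by
  rw [InnerProductSpace.laplacian_eq_iteratedFDeriv_orthonormalBasis g
    (Complex.orthonormalBasisOneI.map (rotation a))]
  simp [iteratedFDeriv_two_apply, rotation_apply]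

section SubMeanValue

variable {g : ℂ → ℝ}

theorem hasDerivAt_integral_comp_circleMap (hg : ContDiff ℝ 1 g) (s : ℝ) :
    HasDerivAt (fun s => ∫ θ in 0..2 * π, g (circleMap 0 s θ))
      (∫ θ in 0..2 * π, fderiv ℝ g (circleMap 0 s θ) (circleMap 0 1 θ)) s := by
  have := hg.continuous_fderiv one_ne_zero
  refine intervalIntegral.hasDerivAt_integral_of_continuous
    (F := fun s θ => g (circleMap 0 s θ))
    (F' := fun s θ => fderiv ℝ g (circleMap 0 s θ) (circleMap 0 1 θ))
    (by fun_prop) (by fun_prop) (fun x θ => ?_) s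
  exact (hg.differentiable one_ne_zero _).hasFDerivAt.comp_hasDerivAt x
    (hasDerivAt_circleMap_radius 0 x θ)

theorem hasDerivAt_integral_fderiv_comp_circleMap (hg : ContDiff ℝ 2 g) (s : ℝ) :
    HasDerivAt (fun s => ∫ θ in 0..2 * π, fderiv ℝ g (circleMap 0 s θ) (circleMap 0 1 θ))
      (∫ θ in 0..2 * π,
        fderiv ℝ (fderiv ℝ g) (circleMap 0 s θ) (circleMap 0 1 θ) (circleMap 0 1 θ)) s := by
  have hg' : ContDiff ℝ 1 (fderiv ℝ g) := hg.fderiv_right (by norm_num)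
  have := hg'.continuous
  have := hg'.continuous_fderiv one_ne_zero
  refine intervalIntegral.hasDerivAt_integral_of_continuous
    (F := fun s θ => fderiv ℝ g (circleMap 0 s θ) (circleMap 0 1 θ))
    (F' := fun s θ => fderiv ℝ (fderiv ℝ g) (circleMap 0 s θ) (circleMap 0 1 θ) (circleMap 0 1 θ))
    (by fun_prop) (by fun_prop) (fun x θ => ?_) s
  simpa using ((hg'.differentiable one_ne_zero _).hasFDerivAt.comp_hasDerivAt x
    (hasDerivAt_circleMap_radius 0 x θ)).clm_apply (hasDerivAt_const x (circleMap 0 1 θ))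

theorem mul_integral_fderiv_comp_circleMap (hg : ContDiff ℝ 2 g) (s : ℝ) :
    s * ∫ θ in 0..2 * π, fderiv ℝ g (circleMap 0 s θ) (circleMap 0 1 θ) =
      s ^ 2 * ∫ θ in 0..2 * π, fderiv ℝ (fderiv ℝ g) (circleMap 0 s θ)
        (circleMap 0 1 θ * Complex.I) (circleMap 0 1 θ * Complex.I) := by
  have hg' : ContDiff ℝ 1 (fderiv ℝ g) := hg.fderiv_right (by norm_num)
  have := hg'.continuous
  have := hg'.continuous_fderiv one_ne_zero
  have hderiv : ∀ θ, HasDerivAt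
      (fun θ => fderiv ℝ g (circleMap 0 s θ) (s • (circleMap 0 1 θ * Complex.I)))
      (s ^ 2 * fderiv ℝ (fderiv ℝ g) (circleMap 0 s θ)
          (circleMap 0 1 θ * Complex.I) (circleMap 0 1 θ * Complex.I)
        - s * fderiv ℝ g (circleMap 0 s θ) (circleMap 0 1 θ)) θ := by
    intro θ
    have h := ((hg'.differentiable one_ne_zero _).hasFDerivAt.comp_hasDerivAt θ
      (hasDerivAt_circleMap 0 s θ)).clm_apply
      (((hasDerivAt_circleMap 0 1 θ).mul_const Complex.I).const_smul s)
    have hγI : circleMap 0 s θ * Complex.I = s • (circleMap 0 1 θ * Complex.I) := by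
      rw [circleMap_zero_eq_smul, smul_mul_assoc]
    refine h.congr_deriv ?_
    simp only [Function.comp_apply, Pi.smul_apply, hγI, mul_assoc, Complex.I_mul_I, mul_neg,
      mul_one, map_smul, map_neg, FunLike.coe_smul, smul_eq_mul, sq]
    ring
  have hperiodic := intervalIntegral.integral_eq_sub_of_hasDerivAt (a := 0) (b := 2 * π)
    (fun θ _ => hderiv θ) (Continuous.intervalIntegrable (by fun_prop) _ _)
  rw [intervalIntegral.integral_sub (Continuous.intervalIntegrable (by fun_prop) _ _)
      (Continuous.intervalIntegrable (by fun_prop) _ _), intervalIntegral.integral_const_mul,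
    intervalIntegral.integral_const_mul, ← zero_add (2 * π), periodic_circleMap,
    periodic_circleMap, sub_self, sub_eq_zero, zero_add] at hperiodic
  exact hperiodic.symm

theorem integral_laplacian_comp_circleMap (hg : ContDiff ℝ 2 g) (s : ℝ) :
    (∫ θ in 0..2 * π,
        fderiv ℝ (fderiv ℝ g) (circleMap 0 s θ) (circleMap 0 1 θ) (circleMap 0 1 θ)) +
      (∫ θ in 0..2 * π, fderiv ℝ (fderiv ℝ g) (circleMap 0 s θ)
        (circleMap 0 1 θ * Complex.I) (circleMap 0 1 θ * Complex.I)) =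
      ∫ θ in 0..2 * π, Δ g (circleMap 0 s θ) := by
  have := (hg.fderiv_right (m := 1) (by norm_num)).continuous_fderiv one_ne_zero
  rw [← intervalIntegral.integral_add (Continuous.intervalIntegrable (by fun_prop) _ _)
    (Continuous.intervalIntegrable (by fun_prop) _ _)]
  refine intervalIntegral.integral_congr fun θ _ => ?_
  simpa [circleMap] using
    (laplacian_eq_fderiv_fderiv_rotation g (Circle.exp θ) (circleMap 0 s θ)).symm

theorem le_circleAverage_of_laplacian_nonneg (hg : ContDiff ℝ 2 g) (hΔ : ∀ w, 0 ≤ Δ g w)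
    {s : ℝ} (hs : 0 ≤ s) : g 0 ≤ circleAverage g 0 s := by
  set B := fun s => ∫ θ in 0..2 * π, fderiv ℝ g (circleMap 0 s θ) (circleMap 0 1 θ)
  set Q := fun s => ∫ θ in 0..2 * π,
    fderiv ℝ (fderiv ℝ g) (circleMap 0 s θ) (circleMap 0 1 θ) (circleMap 0 1 θ)
  have hderiv : ∀ s, HasDerivAt (fun s => s * B s) (B s + s * Q s) s := fun s => by
    simpa only [one_mul] using
      (hasDerivAt_id' s).fun_mul (hasDerivAt_integral_fderiv_comp_circleMap hg s)
  -- `s (B + s Q) = s² ∫ Δg`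
  have hderiv_nonneg : ∀ s, 0 < s → 0 ≤ B s + s * Q s := by
    intro s hs
    refine nonneg_of_mul_nonneg_right ?_ hs
    have hΔs := intervalIntegral.integral_nonneg (μ := volume) (a := 0) (b := 2 * π)
      (by positivity) fun θ _ => hΔ (circleMap 0 s θ)
    rw [← integral_laplacian_comp_circleMap hg s] at hΔs
    have := mul_integral_fderiv_comp_circleMap hg s
    nlinarith
  have hsB : ∀ s, 0 ≤ s → 0 ≤ s * B s := fun s hs => by
    simpa using apply_zero_le_of_deriv_nonneg hderiv hderiv_nonneg hs
  have hA := apply_zero_le_of_deriv_nonneg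
    (hasDerivAt_integral_comp_circleMap (hg.of_le one_le_two))
    (fun s hs => nonneg_of_mul_nonneg_right (hsB s hs.le) hs) hs
  simp only [circleMap_zero_radius, Function.const_apply, intervalIntegral.integral_const,
    sub_zero, smul_eq_mul] at hA
  rw [circleAverage_def, smul_eq_mul, le_inv_mul_iff₀ (by positivity)]
  linarith

end SubMeanValue

theorem setIntegral_Ioo_neg_pi_pi_comp_circleMap {E : Type*} [NormedAddCommGroup E]
    [NormedSpace ℝ E] (g : ℂ → E) (c : ℂ) (s : ℝ) :
    ∫ θ in Ioo (-π) π, g (circleMap c s θ) = (2 * π) • circleAverage g c s := by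
  have := ((periodic_circleMap c s).comp g).intervalIntegral_add_eq (-π) 0
  rw [circleAverage_def, smul_inv_smul₀ (by positivity), ← integral_Ioc_eq_integral_Ioo,
    ← intervalIntegral.integral_of_le (by linarith [pi_pos])]
  simpa [show -π + 2 * π = π by ring] using this

theorem integral_ball_eq_integral_circleAverage {E : Type*} [NormedAddCommGroup E]
    [NormedSpace ℝ E] [CompleteSpace E] {g : ℂ → E} (hg : Continuous g) {r : ℝ} (hr : 0 ≤ r) :
    ∫ w in ball (0 : ℂ) r, g w = (2 * π) • ∫ s in 0..r, s • circleAverage g 0 s := by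
  have hsymm : ∀ p : ℝ × ℝ, Complex.polarCoord.symm p = circleMap 0 p.1 p.2 := fun p => by
    simp [circleMap, Complex.exp_mul_I, ← Complex.ofReal_cos, ← Complex.ofReal_sin]
  have hpre : polarCoord.target ∩ ((fun p : ℝ × ℝ => circleMap 0 p.1 p.2) ⁻¹' ball 0 r) =
      Ioo 0 r ×ˢ Ioo (-π) π := by
    ext ⟨s, θ⟩
    simp only [polarCoord_target, mem_inter_iff, mem_prod, mem_preimage, mem_ball_zero_iff,
      norm_circleMap_zero, mem_Ioi, mem_Ioo]
    constructor
    · rintro ⟨⟨hs, hθ⟩, hsr⟩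
      exact ⟨⟨hs, by rwa [abs_of_pos hs] at hsr⟩, hθ⟩
    · rintro ⟨⟨hs, hsr⟩, hθ⟩
      exact ⟨⟨hs, hθ⟩, by rwa [abs_of_pos hs]⟩
  have hint : IntegrableOn (fun p : ℝ × ℝ => p.1 • g (circleMap 0 p.1 p.2))
      (Ioo 0 r ×ˢ Ioo (-π) π) (volume.prod volume) :=
    (Continuous.continuousOn (by fun_prop)).integrableOn_compact
      (isCompact_Icc.prod isCompact_Icc)
      |>.mono_set (prod_mono Ioo_subset_Icc_self Ioo_subset_Icc_self)
  calc ∫ w in ball (0 : ℂ) r, g w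
      = ∫ p in polarCoord.target, ((fun p : ℝ × ℝ => circleMap 0 p.1 p.2) ⁻¹' ball 0 r).indicator
          (fun p : ℝ × ℝ => p.1 • g (circleMap 0 p.1 p.2)) p := by
        rw [← integral_indicator measurableSet_ball, ← Complex.integral_comp_polarCoord_symm]
        refine setIntegral_congr_fun polarCoord.open_target.measurableSet fun p _ => ?_
        by_cases h : circleMap 0 p.1 p.2 ∈ ball 0 r <;> simp [h, hsymm]
    _ = ∫ p in Ioo 0 r ×ˢ Ioo (-π) π, p.1 • g (circleMap 0 p.1 p.2) := by
        rw [setIntegral_indicator (measurableSet_ball.preimage circleMap.continuous.measurable),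
          hpre]
    _ = ∫ s in Ioo 0 r, s • ∫ θ in Ioo (-π) π, g (circleMap 0 s θ) := by
        rw [Measure.volume_eq_prod, setIntegral_prod _ hint]
        simp only [integral_smul]
    _ = (2 * π) • ∫ s in 0..r, s • circleAverage g 0 s := by
        simp_rw [setIntegral_Ioo_neg_pi_pi_comp_circleMap, smul_comm _ (2 * π)]
        rw [integral_smul, intervalIntegral.integral_of_le hr, integral_Ioc_eq_integral_Ioo]

theorem mul_le_integral_ball_of_laplacian_nonneg {g : ℂ → ℝ} (hg : ContDiff ℝ 2 g)
    (hΔ : ∀ w, 0 ≤ Δ g w) {r : ℝ} (hr : 0 ≤ r) : π * r ^ 2 * g 0 ≤ ∫ w in ball (0 : ℂ) r, g w := by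
  have := hg.continuous
  rw [integral_ball_eq_integral_circleAverage hg.continuous hr, smul_eq_mul]
  calc π * r ^ 2 * g 0 = 2 * π * ∫ s in 0..r, s * g 0 := by
        rw [intervalIntegral.integral_mul_const, integral_id]; ring
    _ ≤ 2 * π * ∫ s in 0..r, s • circleAverage g 0 s := by
        gcongr
        exact intervalIntegral.integral_mono_on hr
          (Continuous.intervalIntegrable (by fun_prop) _ _)
          (Continuous.intervalIntegrable (by fun_prop) _ _) fun s hs =>
          mul_le_mul_of_nonneg_left (le_circleAverage_of_laplacian_nonneg hg hΔ hs.1) hs.1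


theorem SmoothlyPsh.laplacian_nonneg {n : ℕ} {g : (Fin n → ℂ) → ℝ} (hg : SmoothlyPsh n g)
    (a b : Fin n → ℂ) (w : ℂ) : 0 ≤ Δ (fun u : ℂ => g (a + u • b)) w :=
  lap2_eq_laplacian _ ▸ hg a b w

theorem SmoothlyPsh.comp_add_linearMap {k n : ℕ} {g : (Fin n → ℂ) → ℝ} (hg : SmoothlyPsh n g)
    (c : Fin n → ℂ) (L : (Fin k → ℂ) →ₗ[ℂ] Fin n → ℂ) :
    SmoothlyPsh k (fun y => g (c + L y)) := by
  intro a b w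
  simpa only [map_add, map_smul, add_assoc] using hg (c + L a) (L b) w

theorem polydisc_subset_pi_closedBall (n : ℕ) (r : ℝ) :
    polydisc n r ⊆ univ.pi fun _ => closedBall (0 : ℂ) r :=
  fun _ hz => mem_univ_pi.2 fun j => mem_closedBall_zero_iff.2 (hz j).le

section Integrability

variable {E : Type*} [NormedAddCommGroup E]

theorem integrableOn_polydisc {n : ℕ} {f : (Fin n → ℂ) → E} (hf : Continuous f) (r : ℝ) :
    IntegrableOn f (polydisc n r) :=
  (hf.continuousOn.integrableOn_compact
    (isCompact_univ_pi fun _ => isCompact_closedBall _ _)).mono_set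
    (polydisc_subset_pi_closedBall n r)

theorem integrableOn_ball_prod_polydisc {k : ℕ} {f : ℂ × (Fin k → ℂ) → E} (hf : Continuous f)
    (r : ℝ) : IntegrableOn f (ball 0 r ×ˢ polydisc k r) :=
  (hf.continuousOn.integrableOn_compact ((isCompact_closedBall 0 r).prod
    (isCompact_univ_pi fun _ => isCompact_closedBall _ _))).mono_set
    (prod_mono ball_subset_closedBall (polydisc_subset_pi_closedBall k r))

theorem MeasureTheory.IntegrableOn.integral_prod_left [NormedSpace ℝ E] {α β : Type*}
    [MeasurableSpace α] [MeasurableSpace β] {μ : Measure α} {ν : Measure β} [SFinite μ]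
    [SFinite ν] {f : α × β → E} {s : Set α} {t : Set β}
    (hf : IntegrableOn f (s ×ˢ t) (μ.prod ν)) :
    IntegrableOn (fun x => ∫ y in t, f (x, y) ∂ν) s μ := by
  rw [IntegrableOn, ← Measure.prod_restrict] at hf
  exact hf.integral_prod_left

end Integrability

theorem setIntegral_polydisc_succ {E : Type*} [NormedAddCommGroup E] [NormedSpace ℝ E] {k : ℕ}
    {f : (Fin (k + 1) → ℂ) → E} (hf : Continuous f) (r : ℝ) :
    ∫ w in polydisc (k + 1) r, f w = ∫ x in ball 0 r, ∫ y in polydisc k r, f (Fin.cons x y) := by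
  have hpre : (fun p : ℂ × (Fin k → ℂ) => (Fin.cons p.1 p.2 : Fin (k + 1) → ℂ)) ⁻¹'
      polydisc (k + 1) r = ball 0 r ×ˢ polydisc k r := by
    ext ⟨x, y⟩
    simp [polydisc, Fin.forall_fin_succ]
  have hint : IntegrableOn (fun p : ℂ × (Fin k → ℂ) => f (Fin.cons p.1 p.2))
      (ball 0 r ×ˢ polydisc k r) (volume.prod volume) :=
    integrableOn_ball_prod_polydisc (by fun_prop) r
  rw [← (volume_preserving_piFinSuccAbove (fun _ : Fin (k + 1) => ℂ) 0).symm
    |>.setIntegral_preimage_emb (MeasurableEquiv.measurableEmbedding _)]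
  simp_rw [MeasurableEquiv.piFinSuccAbove_symm_apply, Fin.insertNthEquiv, Equiv.coe_fn_mk,
    Fin.insertNth_zero']
  rw [hpre, Measure.volume_eq_prod, setIntegral_prod _ hint]

theorem SmoothlyPsh.pow_mul_le_setIntegral_polydisc {k : ℕ} {g : (Fin k → ℂ) → ℝ}
    (hg : ContDiff ℝ 2 g) (hpsh : SmoothlyPsh k g) {r : ℝ} (hr : 0 ≤ r) :
    (π * r ^ 2) ^ k * g 0 ≤ ∫ w in polydisc k r, g w := by
  induction k with
  | zero =>
    rw [show polydisc 0 r = univ from eq_univ_of_forall fun _ => finZeroElim,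
      Measure.restrict_univ, volume_pi, Measure.pi_of_empty, integral_dirac, pow_zero, one_mul]
    exact le_of_eq (congrArg g (Subsingleton.elim _ _))
  | succ k ih =>
    let L : (Fin k → ℂ) →L[ℂ] Fin (k + 1) → ℂ :=
      ContinuousLinearMap.finCons 0 (ContinuousLinearMap.id ℂ (Fin k → ℂ))
    have hcons : ∀ x, (fun y => g (Fin.cons x y)) = fun y => g (Fin.cons x 0 + L y) :=
      fun x => by
        ext y
        congr 1
        ext j
        refine Fin.cases ?_ (fun i => ?_) j <;> simp [L]
    have hslice : ∀ x, (π * r ^ 2) ^ k * g (Fin.cons x 0) ≤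
        ∫ y in polydisc k r, g (Fin.cons x y) := fun x => by
      simpa using ih (g := fun y => g (Fin.cons x y))
        (hcons x ▸ hg.comp (contDiff_const.add (L.restrictScalars ℝ).contDiff))
        (hcons x ▸ hpsh.comp_add_linearMap _ (L : (Fin k → ℂ) →ₗ[ℂ] Fin (k + 1) → ℂ))
    have hline : (fun x => g (Fin.cons x 0)) = fun x : ℂ => g (0 + x • Fin.cons 1 0) := by
      ext x
      congr 1
      ext j
      refine Fin.cases ?_ (fun i => ?_) j <;> simp
    have hdisc : π * r ^ 2 * g (Fin.cons 0 0) ≤ ∫ x in ball 0 r, g (Fin.cons x 0) :=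
      mul_le_integral_ball_of_laplacian_nonneg (g := fun x => g (Fin.cons x 0))
        (hline ▸ hg.comp (by fun_prop)) (hline ▸ hpsh.laplacian_nonneg 0 (Fin.cons 1 0)) hr
    have := hg.continuous
    calc (π * r ^ 2) ^ (k + 1) * g 0
        = (π * r ^ 2) ^ k * (π * r ^ 2 * g (Fin.cons 0 0)) := by
          rw [show (Fin.cons 0 0 : Fin (k + 1) → ℂ) = 0 from Matrix.cons_zero_zero]; ring
      _ ≤ (π * r ^ 2) ^ k * ∫ x in ball 0 r, g (Fin.cons x 0) := by gcongr
      _ = ∫ x in ball 0 r, (π * r ^ 2) ^ k * g (Fin.cons x 0) := (integral_const_mul _ _).symm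
      _ ≤ ∫ x in ball 0 r, ∫ y in polydisc k r, g (Fin.cons x y) :=
        setIntegral_mono_on ((Continuous.continuousOn (by fun_prop)).integrableOn_compact
            (isCompact_closedBall 0 r) |>.mono_set ball_subset_closedBall)
          (integrableOn_ball_prod_polydisc (f := fun p => g (Fin.cons p.1 p.2)) (by fun_prop) r
            |>.integral_prod_left) measurableSet_ball fun x _ => hslice x
      _ = ∫ w in polydisc (k + 1) r, g w := (setIntegral_polydisc_succ hg.continuous r).symm

theorem setIntegral_polydisc_comp_add_le {n : ℕ} {τ : (Fin n → ℂ) → ℝ} (hτ : Continuous τ)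
    (hnonneg : ∀ z, 0 ≤ τ z) (z : Fin n → ℂ) {r R : ℝ} (hR : ‖z‖ + r ≤ R) :
    ∫ w in polydisc n r, τ (z + w) ≤ ∫ w in polydisc n R, τ w := by
  have hadd := measurePreserving_add_left volume z
  rw [← hadd.setIntegral_preimage_emb (measurableEmbedding_addLeft z) τ (polydisc n R)]
  refine setIntegral_mono_set
    ((hadd.integrableOn_comp_preimage (measurableEmbedding_addLeft z)).2
      (integrableOn_polydisc hτ R))
    (Eventually.of_forall fun w => hnonneg _) (Eventually.of_forall fun w hw j => ?_)
  calc ‖(z + w) j‖ ≤ ‖z j‖ + ‖w j‖ := norm_add_le _ _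
    _ < ‖z‖ + r := add_lt_add_of_le_of_lt (norm_le_pi_norm z j) (hw j)
    _ ≤ R := hR

theorem zero_of_psh_slow_growth_general (n : ℕ) (τ : (Fin n → ℂ) → ℝ)
    (hC2 : ContDiff ℝ 2 τ) (hnonneg : ∀ z, 0 ≤ τ z) (hpsh : SmoothlyPsh n τ)
    (hlim : Tendsto (fun r : ℝ => (1 / r ^ (2 * n)) * ∫ z in polydisc n r, τ z)
      atTop (nhds 0)) :
    ∀ z, τ z = 0 := by
  intro z
  have hbound : ∀ᶠ R in atTop,
      (π / 4) ^ n * τ z ≤ (1 / R ^ (2 * n)) * ∫ w in polydisc n R, τ w := by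
    filter_upwards [eventually_ge_atTop (2 * ‖z‖), eventually_gt_atTop 0] with R hzR hR
    have hmean := (hpsh.comp_add_linearMap z LinearMap.id).pow_mul_le_setIntegral_polydisc
      (hC2.comp (contDiff_const.add contDiff_id)) (r := R / 2) (by positivity)
    have htrans := setIntegral_polydisc_comp_add_le hC2.continuous hnonneg z
      (by linarith : ‖z‖ + R / 2 ≤ R)
    rw [one_div_mul_eq_div, le_div_iff₀ (by positivity)]
    calc (π / 4) ^ n * τ z * R ^ (2 * n) = (π * (R / 2) ^ 2) ^ n * τ (z + 0) := by
          rw [add_zero]; ring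
      _ ≤ ∫ w in polydisc n R, τ w := hmean.trans htrans
  have hzero : (π / 4) ^ n * τ z ≤ 0 := ge_of_tendsto hlim hbound
  exact le_antisymm (nonpos_of_mul_nonpos_right hzero (by positivity)) (hnonneg z)

/-- If `τ : ℂⁿ → ℝ` is a nonnegative `C²` smoothly plurisubharmonic function with
`(1/r^{2n}) ∫_{Δ_r} τ dλ → 0` as `r → ∞`, then `τ ≡ 0`. -/
theorem zero_of_psh_slow_growth (n : ℕ) (hn : 1 ≤ n) (τ : (Fin n → ℂ) → ℝ)
    (hC2 : ContDiff ℝ 2 τ) (hnonneg : ∀ z, 0 ≤ τ z) (hpsh : SmoothlyPsh n τ)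
    (hlim : Tendsto (fun r : ℝ => (1 / r ^ (2 * n)) * ∫ z in polydisc n r, τ z)
      atTop (nhds 0)) :
    ∀ z, τ z = 0 :=
  zero_of_psh_slow_growth_general n τ hC2 hnonneg hpsh hlim
end

section
/- Let n ≥ 1, r > 0 and c > 0. Let v be a real-valued function that is C² and strictly positive on an open neighborhood of the closed ball of radius r centered at 0 in ℂⁿ, and suppose that Δ(log v)(z) ≥ c · v(z) for every z in the open ball of radius r centered at 0. Then v(0) ≤ 8(n+1) / (c · r²). -/
/-!
Let `τ w = (r² - ‖w‖²)² v w`. It vanishes on the sphere of radius `r` and is positive at `0`, so it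
attains its maximum over the closed ball at an interior point `z₀`, where `log τ` has a local
maximum. Restricted to the line through `z₀` in a direction `a`, `log τ` thus has a nonpositive
second derivative at `z₀`; as `log (r² - ‖w‖²)` is explicit along lines, this bounds
`D² (log v) z₀ [a, a]` by `4 ‖a‖² / A + 8 ⟪z₀, a⟫² / A²`, where `A = r² - ‖z₀‖²`. Summing over the
real orthonormal basis `{e_j, i e_j}` gives `c v z₀ ≤ Δ (log v) z₀ ≤ 8 (n + 1) r² / A²`, and
`τ 0 ≤ τ z₀` reads `r⁴ v 0 ≤ A² v z₀`.
-/

open MeasureTheory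

/-- The Laplacian of `f : ℂⁿ → ℝ` at `z`, where `ℂⁿ` is regarded as a `2n`-dimensional real
inner product space with the orthonormal basis `{e_j, i·e_j}`: the sum of the second
derivatives of `f` along the directions of this basis. -/
noncomputable def lapE (n : ℕ) (f : EuclideanSpace ℂ (Fin n) → ℝ)
    (z : EuclideanSpace ℂ (Fin n)) : ℝ :=
  ∑ j : Fin n,
    (iteratedFDeriv ℝ 2 f z
        ![EuclideanSpace.single j (1 : ℂ), EuclideanSpace.single j (1 : ℂ)] +
      iteratedFDeriv ℝ 2 f z
        ![EuclideanSpace.single j Complex.I, EuclideanSpace.single j Complex.I])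

open Filter Topology Metric
open scoped InnerProductSpace

theorem IsLocalMax.second_deriv_nonpos {f f' : ℝ → ℝ} {x d : ℝ} (hmax : IsLocalMax f x)
    (hf : ∀ᶠ t in 𝓝 x, HasDerivAt f (f' t) t) (hf' : HasDerivAt f' d x) : d ≤ 0 := by
  -- If `d > 0`, the second-derivative test makes `x` a local minimum as well, so `f` is locally
  -- constant near `x` and `d = 0`.
  by_contra! hd
  have hderiv : deriv f =ᶠ[𝓝 x] f' := hf.mono fun t ht => ht.deriv
  have hmin : IsLocalMin f x :=
    isLocalMin_of_deriv_deriv_pos (by rwa [hderiv.deriv_eq, hf'.deriv])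
      (by rw [hderiv.self_of_nhds]; exact hmax.hasDerivAt_eq_zero hf.self_of_nhds)
      hf.self_of_nhds.continuousAt
  have hconst : f =ᶠ[𝓝 x] fun _ => f x :=
    (hmin.and hmax).mono fun t ht => le_antisymm ht.2 ht.1
  have hzero : f' =ᶠ[𝓝 x] fun _ => 0 := by
    filter_upwards [hf, hconst.eventuallyEq_nhds] with t ht hct
    exact ht.unique ((hasDerivAt_const t (f x)).congr_of_eventuallyEq hct)
  exact hd.ne' ((hf'.congr_of_eventuallyEq hzero.symm).unique (hasDerivAt_const x 0))

section Line

variable {E : Type*} [NormedAddCommGroup E] [NormedSpace ℝ E] {F : E → ℝ} {z : E}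

theorem ContDiffAt.eventually_hasDerivAt_comp_line (hF : ContDiffAt ℝ 2 F z) (a : E) :
    ∀ᶠ t in 𝓝 (0 : ℝ), HasDerivAt (fun s => F (z + s • a)) (fderiv ℝ F (z + t • a) a) t := by
  have hline : Continuous fun t : ℝ => z + t • a := by fun_prop
  have hnear : ∀ᶠ y in 𝓝 (z + (0 : ℝ) • a), DifferentiableAt ℝ F y := by
    rw [zero_smul, add_zero]
    exact (hF.eventually (by simp)).mono fun y hy => hy.differentiableAt (by norm_num)
  filter_upwards [hline.continuousAt.eventually hnear] with t ht
  have hline' : HasDerivAt (fun s : ℝ => z + s • a) a t := by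
    simpa using ((hasDerivAt_id t).smul_const a).const_add z
  exact ht.hasFDerivAt.comp_hasDerivAt t hline'

theorem ContDiffAt.hasDerivAt_fderiv_comp_line (hF : ContDiffAt ℝ 2 F z) (a : E) :
    HasDerivAt (fun t : ℝ => fderiv ℝ F (z + t • a) a) (iteratedFDeriv ℝ 2 F z ![a, a]) 0 := by
  have hdiff : HasFDerivAt (fderiv ℝ F) (fderiv ℝ (fderiv ℝ F) z) (z + (0 : ℝ) • a) := by
    rw [zero_smul, add_zero]
    exact ((hF.fderiv_right (m := 1) (by norm_num)).differentiableAt (by norm_num)).hasFDerivAt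
  have hline : HasDerivAt (fun t : ℝ => z + t • a) a 0 := by
    simpa using ((hasDerivAt_id (0 : ℝ)).smul_const a).const_add z
  have h : HasDerivAt (fun t : ℝ => fderiv ℝ F (z + t • a)) (fderiv ℝ (fderiv ℝ F) z a) 0 :=
    hdiff.comp_hasDerivAt 0 hline
  rw [iteratedFDeriv_two_apply]
  simpa using h.clm_apply (hasDerivAt_const 0 a)

theorem IsLocalMax.add_iteratedFDeriv_two_nonpos {g g' : ℝ → ℝ} {g'' : ℝ} {a : E}
    (hmax : IsLocalMax (fun t => g t + F (z + t • a)) 0) (hF : ContDiffAt ℝ 2 F z)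
    (hg : ∀ᶠ t in 𝓝 0, HasDerivAt g (g' t) t) (hg' : HasDerivAt g' g'' 0) :
    g'' + iteratedFDeriv ℝ 2 F z ![a, a] ≤ 0 := by
  refine hmax.second_deriv_nonpos ?_ (hg'.add (hF.hasDerivAt_fderiv_comp_line a))
  filter_upwards [hg, hF.eventually_hasDerivAt_comp_line a] with t hgt hFt
  exact hgt.add hFt

end Line

theorem exists_norm_lt_isMaxOn_sq_sub_norm_sq_mul {E : Type*} [NormedAddCommGroup E]
    [ProperSpace E] {v : E → ℝ} {r : ℝ} (hr : 0 < r) (hv : ContinuousOn v (closedBall 0 r))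
    (hv0 : 0 < v 0) :
    ∃ z, ‖z‖ < r ∧ IsMaxOn (fun w => (r ^ 2 - ‖w‖ ^ 2) ^ 2 * v w) (closedBall 0 r) z := by
  have h0 : (0 : E) ∈ closedBall 0 r := mem_closedBall_self hr.le
  obtain ⟨z, hz, hmax⟩ := (isCompact_closedBall (0 : E) r).exists_isMaxOn ⟨0, h0⟩
    ((by fun_prop : Continuous fun w : E => (r ^ 2 - ‖w‖ ^ 2) ^ 2).continuousOn.mul hv)
  refine ⟨z, (mem_closedBall_zero_iff.1 hz).lt_of_ne fun hzr => ?_, hmax⟩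
  have h0z : (r ^ 2 - ‖(0 : E)‖ ^ 2) ^ 2 * v 0 ≤ (r ^ 2 - ‖z‖ ^ 2) ^ 2 * v z := hmax h0
  rw [hzr, norm_zero, sub_self] at h0z
  nlinarith [pow_pos hr 4]

section Weight

variable {E : Type*} [NormedAddCommGroup E] [InnerProductSpace ℝ E]

theorem norm_add_smul_sq (z a : E) (t : ℝ) :
    ‖z + t • a‖ ^ 2 = ‖z‖ ^ 2 + 2 * t * ⟪z, a⟫_ℝ + t ^ 2 * ‖a‖ ^ 2 := by
  rw [norm_add_sq_real, real_inner_smul_right, norm_smul, mul_pow, Real.norm_eq_abs, sq_abs]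
  ring

theorem iteratedFDeriv_two_log_le_of_isLocalMax {v : E → ℝ} {r : ℝ} {z : E} (hz : ‖z‖ < r)
    (hv : ContDiffAt ℝ 2 v z) (hpos : 0 < v z)
    (hmax : IsLocalMax (fun w => (r ^ 2 - ‖w‖ ^ 2) ^ 2 * v w) z) (a : E) :
    iteratedFDeriv ℝ 2 (fun w => Real.log (v w)) z ![a, a] ≤
      4 / (r ^ 2 - ‖z‖ ^ 2) * ‖a‖ ^ 2 + 8 / (r ^ 2 - ‖z‖ ^ 2) ^ 2 * ⟪z, a⟫_ℝ ^ 2 := by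
  set A := r ^ 2 - ‖z‖ ^ 2
  set p := ⟪z, a⟫_ℝ
  have hA : 0 < A := by nlinarith [norm_nonneg z]
  set q : ℝ → ℝ := fun t => A - 2 * p * t - ‖a‖ ^ 2 * t ^ 2
  have hq : ∀ t : ℝ, r ^ 2 - ‖z + t • a‖ ^ 2 = q t := fun t => by
    rw [norm_add_smul_sq]; ring
  have hq' : ∀ t, HasDerivAt q (-2 * p - 2 * ‖a‖ ^ 2 * t) t := fun t => by
    have := (((hasDerivAt_id t).const_mul (2 * p)).const_sub A).sub
      ((hasDerivAt_pow 2 t).const_mul (‖a‖ ^ 2))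
    exact this.congr_deriv (by norm_num; ring)
  have hline : Tendsto (fun t : ℝ => z + t • a) (𝓝 0) (𝓝 z) :=
    (by fun_prop : Continuous fun t : ℝ => z + t • a).tendsto' 0 z (by simp)
  have hq_pos : ∀ᶠ t in 𝓝 0, 0 < q t :=
    continuousAt_const.eventually_lt (by fun_prop : Continuous q).continuousAt (by simpa [q])
  have hv_pos : ∀ᶠ t in 𝓝 (0 : ℝ), 0 < v (z + t • a) :=
    hline.eventually (continuousAt_const.eventually_lt hv.continuousAt hpos)
  have hmax' : IsLocalMax (fun t => 2 * Real.log (q t) + Real.log (v (z + t • a))) 0 := by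
    have hlog : ∀ s, 0 < q s → 0 < v (z + s • a) →
        2 * Real.log (q s) + Real.log (v (z + s • a)) = Real.log (q s ^ 2 * v (z + s • a)) :=
      fun s hqs hvs => by rw [Real.log_mul (by positivity) hvs.ne', Real.log_pow]; push_cast; rfl
    filter_upwards [hline.eventually hmax, hq_pos, hv_pos] with t hτ hqt hvt
    rw [hq t] at hτ
    rw [hlog t hqt hvt, hlog 0 (by simpa [q]) (by simpa), zero_smul, add_zero]
    exact Real.log_le_log (by positivity) (by simpa [q] using hτ)
  have hlogq : ∀ᶠ t in 𝓝 0, HasDerivAt (fun t => 2 * Real.log (q t))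
      (2 * ((-2 * p - 2 * ‖a‖ ^ 2 * t) / q t)) t := by
    filter_upwards [hq_pos] with t ht
    exact ((hq' t).log ht.ne').const_mul 2
  have hlogq' : HasDerivAt (fun t => 2 * ((-2 * p - 2 * ‖a‖ ^ 2 * t) / q t))
      (2 * ((-2 * ‖a‖ ^ 2 * A - (-2 * p) * (-2 * p)) / A ^ 2)) 0 := by
    have hnum : HasDerivAt (fun t : ℝ => -2 * p - 2 * ‖a‖ ^ 2 * t) (-2 * ‖a‖ ^ 2) 0 := by
      simpa using ((hasDerivAt_id (0 : ℝ)).const_mul (2 * ‖a‖ ^ 2)).const_sub (-2 * p)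
    have hq0 : q 0 = A := by simp [q]
    have := (hnum.div (hq' 0) (hq0 ▸ hA.ne')).const_mul 2
    simpa [hq0] using this
  have hmax_nonpos := hmax'.add_iteratedFDeriv_two_nonpos (hv.log hpos.ne') hlogq hlogq'
  have hsecond : 2 * ((-2 * ‖a‖ ^ 2 * A - (-2 * p) * (-2 * p)) / A ^ 2) =
      -(4 / A * ‖a‖ ^ 2 + 8 / A ^ 2 * p ^ 2) := by
    field_simp
    ring
  linarith

end Weight

theorem lapE_le_of_forall_iteratedFDeriv_two_le {n : ℕ} {f : EuclideanSpace ℂ (Fin n) → ℝ}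
    {z : EuclideanSpace ℂ (Fin n)} {α β : ℝ}
    (h : ∀ a, iteratedFDeriv ℝ 2 f z ![a, a] ≤ α * ‖a‖ ^ 2 + β * ⟪z, a⟫_ℝ ^ 2) :
    lapE n f z ≤ 2 * n * α + β * ‖z‖ ^ 2 := by
  have hre : ∀ j, ⟪z, EuclideanSpace.single j (1 : ℂ)⟫_ℝ = (z j).re := fun j => by
    simp [PiLp.inner_apply, PiLp.single_apply, apply_ite]
  have him : ∀ j, ⟪z, EuclideanSpace.single j Complex.I⟫_ℝ = (z j).im := fun j => by
    simp [PiLp.inner_apply, PiLp.single_apply, apply_ite]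
  have hnorm : ‖z‖ ^ 2 = ∑ j, ((z j).re ^ 2 + (z j).im ^ 2) := by
    rw [EuclideanSpace.norm_sq_eq]
    refine Finset.sum_congr rfl fun j _ => ?_
    rw [Complex.sq_norm, Complex.normSq_apply]
    ring
  calc lapE n f z ≤ ∑ j : Fin n, (2 * α + β * ((z j).re ^ 2 + (z j).im ^ 2)) := by
        unfold lapE
        refine Finset.sum_le_sum fun j _ => ?_
        have h1 := h (EuclideanSpace.single j 1)
        have h2 := h (EuclideanSpace.single j Complex.I)
        simp only [hre, him, PiLp.norm_single, norm_one, Complex.norm_I] at h1 h2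
        linarith
    _ = 2 * n * α + β * ‖z‖ ^ 2 := by
        rw [Finset.sum_add_distrib, Finset.sum_const, ← Finset.mul_sum, ← hnorm, Finset.card_univ,
          Fintype.card_fin, nsmul_eq_mul]
        ring

theorem ahlfors_schwarz_general (n : ℕ) (r c : ℝ) (hr : 0 < r) (hc : 0 < c)
    (v : EuclideanSpace ℂ (Fin n) → ℝ) (U : Set (EuclideanSpace ℂ (Fin n)))
    (hU : IsOpen U) (hball : Metric.closedBall (0 : EuclideanSpace ℂ (Fin n)) r ⊆ U)
    (hv : ContDiffOn ℝ 2 v U) (hpos : ∀ z ∈ U, 0 < v z)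
    (hineq : ∀ z ∈ Metric.ball (0 : EuclideanSpace ℂ (Fin n)) r,
      c * v z ≤ lapE n (fun w => Real.log (v w)) z) :
    v 0 ≤ 8 * (n + 1) / (c * r ^ 2) := by
  have h0 := mem_closedBall_self (x := (0 : EuclideanSpace ℂ (Fin n))) hr.le
  obtain ⟨z, hz, hmax⟩ :=
    exists_norm_lt_isMaxOn_sq_sub_norm_sq_mul hr (hv.continuousOn.mono hball) (hpos 0 (hball h0))
  have hzU : z ∈ U := hball (mem_closedBall_zero_iff.2 hz.le)
  have hzball : z ∈ ball 0 r := mem_ball_zero_iff.2 hz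
  set A := r ^ 2 - ‖z‖ ^ 2
  have hA : 0 < A := by nlinarith [norm_nonneg z]
  have hlap : c * v z ≤ 2 * n * (4 / A) + 8 / A ^ 2 * ‖z‖ ^ 2 :=
    (hineq z hzball).trans <| lapE_le_of_forall_iteratedFDeriv_two_le fun a =>
      iteratedFDeriv_two_log_le_of_isLocalMax hz (hv.contDiffAt (hU.mem_nhds hzU)) (hpos z hzU)
        (hmax.isLocalMax (closedBall_mem_nhds_of_mem hzball)) a
  have hweight : r ^ 4 * v 0 ≤ A ^ 2 * v z :=
    calc r ^ 4 * v 0 = (r ^ 2 - ‖(0 : EuclideanSpace ℂ (Fin n))‖ ^ 2) ^ 2 * v 0 := by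
          rw [norm_zero]; ring
      _ ≤ A ^ 2 * v z := hmax h0
  have hlap' : c * v z * A ^ 2 ≤ 8 * (n + 1) * r ^ 2 := by
    rw [show 2 * n * (4 / A) + 8 / A ^ 2 * ‖z‖ ^ 2 = (8 * n * A + 8 * ‖z‖ ^ 2) / A ^ 2 by
      field_simp; ring, le_div_iff₀ (by positivity)] at hlap
    nlinarith [norm_nonneg z]
  rw [le_div_iff₀ (by positivity)]
  nlinarith [pow_pos hr 2, mul_le_mul_of_nonneg_left hweight hc.le]

/-- Ahlfors–Schwarz-type lemma: if `v` is `C²` and positive on a neighborhood of the closed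
ball of radius `r`, and `Δ(log v) ≥ c·v` on the open ball of radius `r`, then
`v(0) ≤ 8(n+1)/(c r²)`. -/
theorem ahlfors_schwarz (n : ℕ) (hn : 1 ≤ n) (r c : ℝ) (hr : 0 < r) (hc : 0 < c)
    (v : EuclideanSpace ℂ (Fin n) → ℝ) (U : Set (EuclideanSpace ℂ (Fin n)))
    (hU : IsOpen U) (hball : Metric.closedBall (0 : EuclideanSpace ℂ (Fin n)) r ⊆ U)
    (hv : ContDiffOn ℝ 2 v U) (hpos : ∀ z ∈ U, 0 < v z)
    (hineq : ∀ z ∈ Metric.ball (0 : EuclideanSpace ℂ (Fin n)) r,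
      c * v z ≤ lapE n (fun w => Real.log (v w)) z) :
    v 0 ≤ 8 * (n + 1) / (c * r ^ 2) :=
  ahlfors_schwarz_general n r c hr hc v U hU hball hv hpos hineq
end

section
/- Let n ≥ 1 and c > 0. There is no function v : ℂⁿ → ℝ that is C², strictly positive everywhere, and satisfies Δ(log v)(z) ≥ c · v(z) for every z ∈ ℂⁿ. -/
open MeasureTheory

/-!
Fix `R > 0` and put `u = log v`. The weight `φ(y) = (R² - |y|²)² v(y)` vanishes on the sphere
`|y| = R`, so it attains its maximum over the closed ball at an interior point `x`, where
`u + 2 log (R² - |y|²)` has a local maximum. The second-derivative test along each unit direction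
bounds the second derivatives of `u` at `x` by those of `-2 log (R² - |y|²)`, which are at most
`8R² / (R² - |x|²)²`; summing over `2n` directions, `c v(x) ≤ Δu(x) ≤ 16 n R² / (R² - |x|²)²`.
Hence `R⁴ v(0) = φ(0) ≤ φ(x) ≤ 16 n R² / c`, i.e. `v(0) ≤ 16 n / (c R²)`, and letting `R → ∞`
contradicts `v(0) > 0`.
-/

open Filter Topology RealInnerProductSpace

theorem IsLocalMax.deriv_deriv_nonpos {f : ℝ → ℝ} {x₀ : ℝ} (h : IsLocalMax f x₀)
    (hc : ContinuousAt f x₀) : deriv (deriv f) x₀ ≤ 0 := by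
  by_contra! hpos
  -- Otherwise `x₀` is also a local minimum, so `f` is locally constant and `f'' x₀ = 0`.
  have hmin : IsLocalMin f x₀ := isLocalMin_of_deriv_deriv_pos hpos h.deriv_eq_zero hc
  have hconst : f =ᶠ[𝓝 x₀] fun _ => f x₀ := (h.and hmin).mono fun _ hx => le_antisymm hx.1 hx.2
  have hzero : deriv (deriv f) x₀ = 0 := by simp [hconst.deriv.deriv_eq]
  exact hpos.ne' hzero

theorem IsLocalMax.nonpos_of_hasDerivAt_deriv {f f' : ℝ → ℝ} {x₀ d : ℝ} (h : IsLocalMax f x₀)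
    (hf : ∀ᶠ x in 𝓝 x₀, HasDerivAt f (f' x) x) (hf' : HasDerivAt f' d x₀) : d ≤ 0 := by
  have hderiv : deriv f =ᶠ[𝓝 x₀] f' := hf.mono fun _ hx => hx.deriv
  rw [← hf'.deriv, ← hderiv.deriv_eq]
  exact h.deriv_deriv_nonpos hf.self_of_nhds.continuousAt

theorem le_of_isLocalMax_add_two_mul_log_quadratic {g g' : ℝ → ℝ} {d s a : ℝ} (hs : 0 < s)
    (hg : ∀ t, HasDerivAt g (g' t) t) (hg' : HasDerivAt g' d 0)
    (hmax : IsLocalMax (fun t => g t + 2 * Real.log (s - 2 * a * t - t ^ 2)) 0) :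
    d ≤ (4 * s + 8 * a ^ 2) / s ^ 2 := by
  set q : ℝ → ℝ := fun t => s - 2 * a * t - t ^ 2
  have hq : ∀ t, HasDerivAt q (-2 * a - 2 * t) t := fun t => by
    refine ((((hasDerivAt_id' t).const_mul (2 * a)).const_sub s).sub
      ((hasDerivAt_id' t).pow 2)).congr_deriv ?_
    norm_num
  have hq0 : q 0 = s := by simp [q]
  have hqpos : ∀ᶠ t in 𝓝 0, 0 < q t :=
    (hq 0).continuousAt.eventually (eventually_gt_nhds (hq0 ▸ hs))
  have hderiv : ∀ᶠ t in 𝓝 0, HasDerivAt (fun t => g t + 2 * Real.log (q t))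
      (g' t + 2 * ((-2 * a - 2 * t) / q t)) t :=
    hqpos.mono fun t ht => (hg t).add (((hq t).log ht.ne').const_mul 2)
  have hderiv2 := hg'.add ((((hasDerivAt_id' (0 : ℝ)).const_mul 2).const_sub (-2 * a)).div
    (hq 0) (hq0 ▸ hs.ne') |>.const_mul 2)
  have key := hmax.nonpos_of_hasDerivAt_deriv hderiv hderiv2
  simp only [hq0, mul_zero, sub_zero, mul_one] at key
  calc d ≤ -(2 * ((-2 * s - -2 * a * (-2 * a)) / s ^ 2)) := by linarith
    _ = (4 * s + 8 * a ^ 2) / s ^ 2 := by ring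

section Line

variable {E : Type*} [NormedAddCommGroup E] [NormedSpace ℝ E] {u : E → ℝ}

theorem hasDerivAt_add_smul (x e : E) (t : ℝ) : HasDerivAt (fun s : ℝ => x + s • e) e t :=
  ((hasDerivAt_id t).smul_const e).const_add x |>.congr_deriv (one_smul ℝ e)

theorem hasDerivAt_comp_add_smul (hu : Differentiable ℝ u) (x e : E) (t : ℝ) :
    HasDerivAt (fun s : ℝ => u (x + s • e)) (fderiv ℝ u (x + t • e) e) t :=
  (hu _).hasFDerivAt.comp_hasDerivAt t (hasDerivAt_add_smul x e t)

theorem hasDerivAt_fderiv_comp_add_smul (hu : ContDiff ℝ 2 u) (x e : E) (t : ℝ) :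
    HasDerivAt (fun s : ℝ => fderiv ℝ u (x + s • e) e)
      (iteratedFDeriv ℝ 2 u (x + t • e) ![e, e]) t := by
  have hfderiv : Differentiable ℝ (fderiv ℝ u) :=
    (hu.fderiv_right (m := 1) (by norm_num)).differentiable (by norm_num)
  rw [iteratedFDeriv_two_apply]
  simpa using ((hfderiv _).hasFDerivAt.comp_hasDerivAt t (hasDerivAt_add_smul x e t)).clm_apply
    (hasDerivAt_const t e)

end Line

theorem sq_sub_norm_sq_pos_of_norm_lt {E : Type*} [SeminormedAddCommGroup E] {x : E} {R : ℝ}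
    (hx : ‖x‖ < R) : 0 < R ^ 2 - ‖x‖ ^ 2 :=
  sub_pos.2 (pow_lt_pow_left₀ hx (norm_nonneg x) two_ne_zero)

section InnerProduct

variable {E : Type*} [NormedAddCommGroup E] [InnerProductSpace ℝ E]

theorem norm_add_smul_sq_of_norm_eq_one (x : E) {e : E} (he : ‖e‖ = 1) (t : ℝ) :
    ‖x + t • e‖ ^ 2 = ‖x‖ ^ 2 + 2 * ⟪x, e⟫ * t + t ^ 2 := by
  rw [norm_add_sq_real, inner_smul_right, norm_smul, he, Real.norm_eq_abs, mul_one, sq_abs]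
  ring

theorem iteratedFDeriv_two_le_of_isLocalMax_add_log {u : E → ℝ} (hu : ContDiff ℝ 2 u) {R : ℝ}
    {x : E} (hx : ‖x‖ < R) (hmax : IsLocalMax (fun y => u y + 2 * Real.log (R ^ 2 - ‖y‖ ^ 2)) x)
    {e : E} (he : ‖e‖ = 1) :
    iteratedFDeriv ℝ 2 u x ![e, e] ≤ 8 * R ^ 2 / (R ^ 2 - ‖x‖ ^ 2) ^ 2 := by
  set s := R ^ 2 - ‖x‖ ^ 2
  have hs : 0 < s := sq_sub_norm_sq_pos_of_norm_lt hx
  have hline : IsLocalMax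
      (fun t : ℝ => u (x + t • e) + 2 * Real.log (s - 2 * ⟪x, e⟫ * t - t ^ 2)) 0 := by
    have hmax' : IsLocalMax (fun y => u y + 2 * Real.log (R ^ 2 - ‖y‖ ^ 2)) (x + (0 : ℝ) • e) := by
      rwa [zero_smul, add_zero]
    refine (hmax'.comp_continuous (g := fun t : ℝ => x + t • e) (by fun_prop)).congr
      (Eventually.of_forall fun t => ?_)
    simp only [Function.comp_apply, norm_add_smul_sq_of_norm_eq_one x he, s]
    ring_nf
  have key := le_of_isLocalMax_add_two_mul_log_quadratic hs
    (hasDerivAt_comp_add_smul (hu.differentiable two_ne_zero) x e)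
    (hasDerivAt_fderiv_comp_add_smul hu x e 0) hline
  rw [zero_smul, add_zero] at key
  have hinner : ⟪x, e⟫ ^ 2 ≤ ‖x‖ ^ 2 := by
    simpa [he, sq_abs] using pow_le_pow_left₀ (abs_nonneg _) (abs_real_inner_le_norm x e) 2
  refine key.trans (div_le_div_of_nonneg_right ?_ (sq_nonneg s))
  linarith

end InnerProduct

section Weight

variable {E : Type*} [NormedAddCommGroup E] {v : E → ℝ} {R : ℝ}

theorem exists_isMaxOn_closedBall_weight [ProperSpace E] (hv : Continuous v) (hv0 : 0 < v 0)
    (hR : 0 < R) :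
    ∃ x, ‖x‖ < R ∧ IsMaxOn (fun y => (R ^ 2 - ‖y‖ ^ 2) ^ 2 * v y) (Metric.closedBall 0 R) x := by
  obtain ⟨x, hxmem, hxmax⟩ := (isCompact_closedBall (0 : E) R).exists_isMaxOn
    (Metric.nonempty_closedBall.2 hR.le)
    (by fun_prop : Continuous fun y : E => (R ^ 2 - ‖y‖ ^ 2) ^ 2 * v y).continuousOn
  refine ⟨x, (mem_closedBall_zero_iff.1 hxmem).lt_of_ne fun hxR => ?_, hxmax⟩
  have h0 : (R ^ 2 - ‖(0 : E)‖ ^ 2) ^ 2 * v 0 ≤ (R ^ 2 - ‖x‖ ^ 2) ^ 2 * v x :=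
    hxmax (Metric.mem_closedBall_self hR.le)
  rw [hxR, sub_self, norm_zero] at h0
  norm_num at h0
  exact h0.not_gt (by positivity)

theorem isLocalMax_log_add_two_mul_log_of_isMaxOn (hv : ∀ y, 0 < v y) {x : E} (hx : ‖x‖ < R)
    (hmax : IsMaxOn (fun y => (R ^ 2 - ‖y‖ ^ 2) ^ 2 * v y) (Metric.closedBall 0 R) x) :
    IsLocalMax (fun y => Real.log (v y) + 2 * Real.log (R ^ 2 - ‖y‖ ^ 2)) x := by
  have hlog : ∀ y : E, ‖y‖ < R → Real.log ((R ^ 2 - ‖y‖ ^ 2) ^ 2 * v y) =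
      Real.log (v y) + 2 * Real.log (R ^ 2 - ‖y‖ ^ 2) := fun y hy => by
    rw [Real.log_mul (pow_pos (sq_sub_norm_sq_pos_of_norm_lt hy) 2).ne' (hv y).ne', Real.log_pow]
    push_cast
    ring
  filter_upwards [Metric.isOpen_ball.mem_nhds (mem_ball_zero_iff.2 hx)] with y hy
  rw [mem_ball_zero_iff] at hy
  rw [← hlog y hy, ← hlog x hx]
  exact Real.log_le_log (mul_pos (pow_pos (sq_sub_norm_sq_pos_of_norm_lt hy) 2) (hv y))
    (hmax (Metric.ball_subset_closedBall (mem_ball_zero_iff.2 hy)))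

end Weight

theorem lapE_le_of_forall_norm_eq_one {n : ℕ} {f : EuclideanSpace ℂ (Fin n) → ℝ}
    {z : EuclideanSpace ℂ (Fin n)} {M : ℝ}
    (h : ∀ e : EuclideanSpace ℂ (Fin n), ‖e‖ = 1 → iteratedFDeriv ℝ 2 f z ![e, e] ≤ M) :
    lapE n f z ≤ 2 * n * M :=
  calc lapE n f z ≤ ∑ _j : Fin n, (M + M) :=
        Finset.sum_le_sum fun j _ => add_le_add (h _ (by simp)) (h _ (by simp))
    _ = 2 * n * M := by simp; ring

theorem apply_zero_le_of_le_lapE_log {n : ℕ} {c : ℝ} (hc : 0 < c)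
    {v : EuclideanSpace ℂ (Fin n) → ℝ} (hv : ContDiff ℝ 2 v) (hpos : ∀ z, 0 < v z)
    (hsuper : ∀ z, c * v z ≤ lapE n (fun w => Real.log (v w)) z) {R : ℝ} (hR : 0 < R) :
    v 0 ≤ 16 * n / (c * R ^ 2) := by
  obtain ⟨x, hx, hmax⟩ := exists_isMaxOn_closedBall_weight hv.continuous (hpos 0) hR
  set s := R ^ 2 - ‖x‖ ^ 2
  have hs : 0 < s := sq_sub_norm_sq_pos_of_norm_lt hx
  have hlap : lapE n (fun w => Real.log (v w)) x ≤ 2 * n * (8 * R ^ 2 / s ^ 2) :=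
    lapE_le_of_forall_norm_eq_one fun e he => iteratedFDeriv_two_le_of_isLocalMax_add_log
      (hv.log fun z => (hpos z).ne') hx (isLocalMax_log_add_two_mul_log_of_isMaxOn hpos hx hmax) he
  have hx_le : c * (s ^ 2 * v x) ≤ 16 * n * R ^ 2 :=
    calc c * (s ^ 2 * v x) = s ^ 2 * (c * v x) := by ring
      _ ≤ s ^ 2 * (2 * n * (8 * R ^ 2 / s ^ 2)) :=
        mul_le_mul_of_nonneg_left ((hsuper x).trans hlap) (sq_nonneg s)
      _ = 16 * n * R ^ 2 := by field_simp; ring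
  have h0_le : (R ^ 2) ^ 2 * v 0 ≤ s ^ 2 * v x := by
    simpa using hmax (Metric.mem_closedBall_self hR.le)
  rw [le_div_iff₀ (by positivity)]
  refine le_of_mul_le_mul_right ?_ (pow_pos hR 2)
  calc v 0 * (c * R ^ 2) * R ^ 2 = c * ((R ^ 2) ^ 2 * v 0) := by ring
    _ ≤ c * (s ^ 2 * v x) := mul_le_mul_of_nonneg_left h0_le hc.le
    _ ≤ 16 * n * R ^ 2 := hx_le

theorem no_global_log_supersolution_general (n : ℕ) (c : ℝ) (hc : 0 < c) :
    ¬ ∃ v : EuclideanSpace ℂ (Fin n) → ℝ, ContDiff ℝ 2 v ∧ (∀ z, 0 < v z) ∧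
      ∀ z, c * v z ≤ lapE n (fun w => Real.log (v w)) z := by
  rintro ⟨v, hv, hpos, hsuper⟩
  have hbound : ∀ᶠ R in atTop, v 0 ≤ 16 * n / (c * R ^ 2) :=
    (eventually_gt_atTop 0).mono fun R hR => apply_zero_le_of_le_lapE_log hc hv hpos hsuper hR
  have hlim : Tendsto (fun R : ℝ => 16 * n / (c * R ^ 2)) atTop (𝓝 0) :=
    tendsto_const_nhds.div_atTop ((tendsto_pow_atTop two_ne_zero).const_mul_atTop hc)
  exact (hpos 0).not_ge (ge_of_tendsto hlim hbound)

/-- There is no `C²`, everywhere strictly positive function `v : ℂⁿ → ℝ` satisfying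
`Δ(log v)(z) ≥ c · v(z)` for every `z ∈ ℂⁿ`. -/
theorem no_global_log_supersolution (n : ℕ) (hn : 1 ≤ n) (c : ℝ) (hc : 0 < c) :
    ¬ ∃ v : EuclideanSpace ℂ (Fin n) → ℝ, ContDiff ℝ 2 v ∧ (∀ z, 0 < v z) ∧
      ∀ z, c * v z ≤ lapE n (fun w => Real.log (v w)) z :=
  no_global_log_supersolution_general n c hc
end

section
/- Let n ≥ 1 and let τ : ℂⁿ → ℝ be a C² smoothly plurisubharmonic function. Then the function (s₁, …, sₙ) ↦ M_τ(e^{s₁}, …, e^{sₙ}) is convex on ℝⁿ, where M_τ(t₁, …, tₙ) = ∫_{[0,2π]ⁿ} τ(t₁e^{iθ₁}, …, tₙe^{iθₙ}) dθ₁⋯dθₙ is the polycircle mean; that is, M_τ is convex in the variables log t_j. -/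
open MeasureTheory

/-- The polycircle mean `M_τ(t₁, …, tₙ) = ∫_{[0,2π]ⁿ} τ(t₁e^{iθ₁}, …, tₙe^{iθₙ}) dθ`. -/
noncomputable def polyMean (n : ℕ) (τ : (Fin n → ℂ) → ℝ) (t : Fin n → ℝ) : ℝ :=
  ∫ θ : Fin n → ℝ in Set.univ.pi (fun _ => Set.Icc 0 (2 * Real.pi)),
    τ (fun j => (t j : ℂ) * Complex.exp (Complex.I * (θ j : ℂ)))

/-!
Integrate over the torus `(ℝ/2πℤ)ⁿ` with its Haar measure instead of `[0, 2π]ⁿ`, and allow complex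
log-radii: `H(s) = ∫ τ(z(s, φ)) dφ` with `z(s, φ)_j = e^{s_j} e^{iφ_j}`, `s ∈ ℂⁿ`. Adding `i r`
(`r ∈ ℝⁿ`) to `s` translates the torus, so `H` does not depend on `Im s`. For real `c`, the second
derivatives of `t ↦ H(s + t c)` and `t ↦ H(s + t i c)` add up to the mean over `φ` of the Levi
form of `τ` at `z(s, φ)` in the direction `(c_j z_j)_j`, which is nonnegative by
plurisubharmonicity; the second one vanishes, so `t ↦ H(s + t c)` is convex.
-/

open Set Complex

lemma convexOn_univ_of_forall_line {E : Type*} [AddCommGroup E] [Module ℝ E] {f : E → ℝ}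
    (hf : ∀ x v : E, ConvexOn ℝ univ fun t : ℝ => f (x + t • v)) : ConvexOn ℝ univ f := by
  refine ⟨convex_univ, fun x _ y _ a b ha hb hab => ?_⟩
  have h := (hf x (y - x)).2 (mem_univ 0) (mem_univ 1) ha hb hab
  have hseg : a • x + b • y = x + b • (y - x) := by rw [eq_sub_of_add_eq hab]; module
  simpa [hseg] using h

lemma integral_univ_pi_Icc_eq_integral_addCircle {ι E : Type*} [Fintype ι]
    [NormedAddCommGroup E] [NormedSpace ℝ E] {T : ℝ} [Fact (0 < T)]
    {f : (ι → AddCircle T) → E} (hf : Continuous f) :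
    ∫ θ in univ.pi fun _ => Icc 0 T, f (fun i => θ i) = ∫ φ, f φ := by
  have hmk := measurePreserving_pi (fun _ : ι => volume.restrict (Ioc 0 (0 + T)))
    (fun _ => volume) fun _ => AddCircle.measurePreserving_mk T 0
  rw [zero_add] at hmk
  rw [volume_pi, ← setIntegral_congr_set Measure.pi_Ioc_ae_eq_pi_Icc, Measure.restrict_pi_pi,
    volume_pi (α := fun _ => AddCircle T), ← hmk.map_eq,
    integral_map hmk.aemeasurable hf.aestronglyMeasurable]

lemma hasDerivAt_integral_of_continuous {X : Type*} [TopologicalSpace X] [CompactSpace X]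
    [MeasurableSpace X] [OpensMeasurableSpace X] {μ : Measure X} [IsFiniteMeasure μ]
    {F F' : ℝ → X → ℝ} (hF : ∀ t, Continuous (F t)) (hF' : Continuous F'.uncurry)
    (hderiv : ∀ t x, HasDerivAt (F · x) (F' t x) t) (t₀ : ℝ) :
    HasDerivAt (fun t => ∫ x, F t x ∂μ) (∫ x, F' t₀ x ∂μ) t₀ := by
  obtain ⟨C, hC⟩ := (isCompact_closedBall t₀ 1 |>.prod isCompact_univ).exists_bound_of_continuousOn
    hF'.continuousOn
  refine (hasDerivAt_integral_of_dominated_loc_of_deriv_le (bound := fun _ => C)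
    (Metric.ball_mem_nhds t₀ one_pos) (.of_forall fun t => (hF t).aestronglyMeasurable)
    ((hF t₀).integrable_of_hasCompactSupport (.of_compactSpace _))
    (hF'.comp (Continuous.prodMk_right t₀)).aestronglyMeasurable
    (.of_forall fun x t ht => hC (t, x) ⟨Metric.ball_subset_closedBall ht, mem_univ x⟩)
    (integrable_const C) (.of_forall fun x t _ => hderiv t x)).2

lemma SmoothlyPsh.levi_nonneg {n : ℕ} {τ : (Fin n → ℂ) → ℝ} (hpsh : SmoothlyPsh n τ)
    (hτ : ContDiff ℝ 2 τ) (z b : Fin n → ℂ) :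
    0 ≤ fderiv ℝ (fderiv ℝ τ) z b b + fderiv ℝ (fderiv ℝ τ) z (I • b) (I • b) := by
  have hline (v : ℂ) : iteratedFDeriv ℝ 2 (fun u : ℂ => τ (z + u • b)) 0 ![v, v]
      = fderiv ℝ (fderiv ℝ τ) z (v • b) (v • b) := by
    let L : ℂ →L[ℝ] Fin n → ℂ := (ContinuousLinearMap.toSpanSingleton ℂ b).restrictScalars ℝ
    have hcomp : (fun u : ℂ => τ (z + u • b)) = (fun y => τ (z + y)) ∘ L := rfl
    have hτz : ContDiff ℝ 2 fun y => τ (z + y) := hτ.comp (contDiff_const.add contDiff_id)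
    rw [hcomp, L.iteratedFDeriv_comp_right hτz 0 le_rfl, iteratedFDeriv_comp_add_left,
      ContinuousMultilinearMap.compContinuousLinearMap_apply, iteratedFDeriv_two_apply]
    simp [L]
  simpa [lap2, hline] using hpsh z b 0

open Real in
instance : Fact (0 < 2 * π) := ⟨two_pi_pos⟩

noncomputable def polyCircle {n : ℕ} (s : Fin n → ℂ) (φ : Fin n → AddCircle (2 * Real.pi)) :
    Fin n → ℂ :=
  fun j => exp (s j) * AddCircle.toCircle (φ j)

noncomputable def torusMean {n : ℕ} (τ : (Fin n → ℂ) → ℝ) (s : Fin n → ℂ) : ℝ :=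
  ∫ φ, τ (polyCircle s φ)

noncomputable def torusMeanDeriv {n : ℕ} (τ : (Fin n → ℂ) → ℝ) (s d : Fin n → ℂ) : ℝ :=
  ∫ φ, fderiv ℝ τ (polyCircle s φ) (d * polyCircle s φ)

noncomputable def torusMeanDeriv2 {n : ℕ} (τ : (Fin n → ℂ) → ℝ) (s d : Fin n → ℂ) : ℝ :=
  ∫ φ, (fderiv ℝ (fderiv ℝ τ) (polyCircle s φ) (d * polyCircle s φ) (d * polyCircle s φ)
    + fderiv ℝ τ (polyCircle s φ) (d * (d * polyCircle s φ)))

section TorusMean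

variable {n : ℕ} {τ : (Fin n → ℂ) → ℝ}

@[fun_prop]
lemma Continuous.polyCircle {X : Type*} [TopologicalSpace X] {s : X → Fin n → ℂ}
    {φ : X → Fin n → AddCircle (2 * Real.pi)} (hs : Continuous s) (hφ : Continuous φ) :
    Continuous fun x => _root_.polyCircle (s x) (φ x) :=
  continuous_pi fun j => ((continuous_apply j).comp hs).cexp.mul <|
    continuous_subtype_val.comp <| AddCircle.continuous_toCircle.comp <|
      (continuous_apply j).comp hφ

lemma polyMean_exp_eq_torusMean (hτ : Continuous τ) (x : Fin n → ℝ) :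
    polyMean n τ (fun j => Real.exp (x j)) = torusMean τ fun j => (x j : ℂ) := by
  rw [torusMean, ← integral_univ_pi_Icc_eq_integral_addCircle (by fun_prop), polyMean]
  congr 1 with θ
  congr 1 with j
  simp [polyCircle, AddCircle.toCircle_apply_mk, Circle.coe_exp, mul_comm]

lemma polyCircle_add_I_smul (s : Fin n → ℂ) (r : Fin n → ℝ)
    (φ : Fin n → AddCircle (2 * Real.pi)) :
    polyCircle (s + I • fun j => (r j : ℂ)) φ =
      polyCircle s (φ + fun j => (r j : AddCircle _)) := by
  funext j
  simp only [polyCircle, Pi.add_apply, Pi.smul_apply, smul_eq_mul, exp_add,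
    AddCircle.toCircle_add, AddCircle.toCircle_apply_mk, div_self Real.two_pi_pos.ne', one_mul,
    Circle.coe_mul, Circle.coe_exp]
  rw [mul_comm I]
  ac_rfl

lemma torusMean_add_I_smul (s : Fin n → ℂ) (r : Fin n → ℝ) :
    torusMean τ (s + I • fun j => (r j : ℂ)) = torusMean τ s := by
  simp only [torusMean, polyCircle_add_I_smul]
  exact integral_add_right_eq_self (fun φ => τ (polyCircle s φ)) _

lemma hasDerivAt_polyCircle_line (s d : Fin n → ℂ) (φ : Fin n → AddCircle (2 * Real.pi))
    (t : ℝ) :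
    HasDerivAt (fun t : ℝ => polyCircle (s + t • d) φ) (d * polyCircle (s + t • d) φ) t := by
  refine hasDerivAt_pi.mpr fun j => ?_
  have hline : HasDerivAt (fun t : ℝ => s j + t * d j) (d j) t := by
    simpa using ((hasDerivAt_id t).ofReal_comp.mul_const (d j)).const_add (s j)
  simp only [polyCircle, Pi.mul_apply, Pi.add_apply, Pi.smul_apply, real_smul]
  exact (hline.cexp.mul_const _).congr_deriv (by ring)

lemma hasDerivAt_torusMean_line (hτ : ContDiff ℝ 2 τ) (s d : Fin n → ℂ) (t : ℝ) :
    HasDerivAt (fun t : ℝ => torusMean τ (s + t • d)) (torusMeanDeriv τ (s + t • d) d) t := by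
  have := hτ.continuous_fderiv two_ne_zero
  exact hasDerivAt_integral_of_continuous (fun _ => by fun_prop) (by fun_prop)
    (fun t φ => (hτ.differentiable two_ne_zero _).hasFDerivAt.comp_hasDerivAt t
      (hasDerivAt_polyCircle_line s d φ t)) t

lemma hasDerivAt_torusMeanDeriv_line (hτ : ContDiff ℝ 2 τ) (s d : Fin n → ℂ) (t : ℝ) :
    HasDerivAt (fun t : ℝ => torusMeanDeriv τ (s + t • d) d)
      (torusMeanDeriv2 τ (s + t • d) d) t := by
  have hτ' : ContDiff ℝ 1 (fderiv ℝ τ) := hτ.fderiv_right le_rfl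
  have := hτ'.continuous
  have := hτ'.continuous_fderiv one_ne_zero
  exact hasDerivAt_integral_of_continuous (fun _ => by fun_prop) (by fun_prop)
    (fun t φ => ((hτ'.differentiable one_ne_zero _).hasFDerivAt.comp_hasDerivAt t
      (hasDerivAt_polyCircle_line s d φ t)).clm_apply
        ((hasDerivAt_polyCircle_line s d φ t).const_mul d)) t

lemma torusMeanDeriv2_I_smul_eq_zero (hτ : ContDiff ℝ 2 τ) (s : Fin n → ℂ) (c : Fin n → ℝ) :
    torusMeanDeriv2 τ s (I • fun j => (c j : ℂ)) = 0 := by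
  set d : Fin n → ℂ := I • fun j => (c j : ℂ)
  have hconst (t : ℝ) : torusMean τ (s + t • d) = torusMean τ s := by
    convert torusMean_add_I_smul s (t • c) using 2
    funext j
    simp only [Pi.add_apply, Pi.smul_apply, smul_eq_mul, real_smul, ofReal_mul, d]
    ring
  have hderiv (t : ℝ) : torusMeanDeriv τ (s + t • d) d = 0 := by
    have h := hasDerivAt_torusMean_line hτ s d t
    rw [funext hconst] at h
    exact h.unique (hasDerivAt_const t _)
  have h := hasDerivAt_torusMeanDeriv_line hτ s d 0
  rw [funext hderiv, zero_smul, add_zero] at h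
  exact h.unique (hasDerivAt_const 0 0)

lemma torusMeanDeriv2_add_I_smul_nonneg (hτ : ContDiff ℝ 2 τ) (hpsh : SmoothlyPsh n τ)
    (s d : Fin n → ℂ) : 0 ≤ torusMeanDeriv2 τ s d + torusMeanDeriv2 τ s (I • d) := by
  have := hτ.continuous_fderiv two_ne_zero
  have := (hτ.fderiv_right (m := 1) le_rfl).continuous_fderiv one_ne_zero
  rw [torusMeanDeriv2, torusMeanDeriv2, ← integral_add
    (Continuous.integrable_of_hasCompactSupport (by fun_prop) (.of_compactSpace _))
    (Continuous.integrable_of_hasCompactSupport (by fun_prop) (.of_compactSpace _))]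
  refine integral_nonneg fun φ => ?_
  set z := polyCircle s φ
  have hI : (I • d) * z = I • (d * z) := smul_mul_assoc I d z
  have hII : (I • d) * ((I • d) * z) = -(d * (d * z)) := by
    rw [hI, smul_mul_assoc, mul_smul_comm, smul_smul, I_mul_I, neg_one_smul]
  have := hpsh.levi_nonneg hτ z (d * z)
  rw [Pi.zero_apply, hII, hI, map_neg]
  linarith

lemma convexOn_torusMean_line (hτ : ContDiff ℝ 2 τ) (hpsh : SmoothlyPsh n τ) (s : Fin n → ℂ)
    (c : Fin n → ℝ) :
    ConvexOn ℝ univ fun t : ℝ => torusMean τ (s + t • fun j => (c j : ℂ)) := by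
  set d : Fin n → ℂ := fun j => (c j : ℂ)
  have hderiv : deriv (fun t : ℝ => torusMean τ (s + t • d)) =
      fun t => torusMeanDeriv τ (s + t • d) d :=
    funext fun t => (hasDerivAt_torusMean_line hτ s d t).deriv
  refine convexOn_univ_of_deriv2_nonneg
    (fun t => (hasDerivAt_torusMean_line hτ s d t).differentiableAt)
    (hderiv ▸ fun t => (hasDerivAt_torusMeanDeriv_line hτ s d t).differentiableAt) fun t => ?_
  rw [Function.iterate_succ_apply, Function.iterate_one, hderiv,
    (hasDerivAt_torusMeanDeriv_line hτ s d t).deriv]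
  have hIm : torusMeanDeriv2 τ (s + t • d) (I • d) = 0 :=
    torusMeanDeriv2_I_smul_eq_zero hτ (s + t • d) c
  linarith [torusMeanDeriv2_add_I_smul_nonneg hτ hpsh (s + t • d) d]

end TorusMean

theorem polyMean_convexOn_log_general (n : ℕ) (τ : (Fin n → ℂ) → ℝ)
    (hC2 : ContDiff ℝ 2 τ) (hpsh : SmoothlyPsh n τ) :
    ConvexOn ℝ Set.univ (fun s : Fin n → ℝ => polyMean n τ (fun j => Real.exp (s j))) := by
  refine convexOn_univ_of_forall_line fun x c => ?_
  simp only [polyMean_exp_eq_torusMean hC2.continuous]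
  convert convexOn_torusMean_line hC2 hpsh (fun j => (x j : ℂ)) c using 3 with t
  funext j
  simp

/-- The polycircle mean of a `C²` smoothly plurisubharmonic function is convex in the
variables `log t_j`: the function `(s₁, …, sₙ) ↦ M_τ(e^{s₁}, …, e^{sₙ})` is convex on `ℝⁿ`. -/
theorem polyMean_convexOn_log (n : ℕ) (hn : 1 ≤ n) (τ : (Fin n → ℂ) → ℝ)
    (hC2 : ContDiff ℝ 2 τ) (hpsh : SmoothlyPsh n τ) :
    ConvexOn ℝ Set.univ (fun s : Fin n → ℝ => polyMean n τ (fun j => Real.exp (s j))) :=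
  polyMean_convexOn_log_general n τ hC2 hpsh
end

section
/- Let n ≥ 1 and r > 0. For every z ∈ ℂⁿ with ‖z‖ < r, the Laplacian of the function w ↦ log(1 − ‖w‖²/r²), evaluated at z, satisfies Δ(log(1 − ‖·‖²/r²))(z) ≥ −4(n+1) / (r² · (1 − ‖z‖²/r²)²). -/
open Topology Real

section SecondDerivative

variable {𝕜 E F : Type*} [NontriviallyNormedField 𝕜] [NormedAddCommGroup E] [NormedSpace 𝕜 E]
  [NormedAddCommGroup F] [NormedSpace 𝕜 F]

theorem iteratedFDeriv_two_apply_of_hasFDerivAt {f : E → F} {f' : E → E →L[𝕜] F}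
    {L : E →L[𝕜] F} {z u v : E} (hf : ∀ᶠ w in 𝓝 z, HasFDerivAt f (f' w) w)
    (hf₂ : DifferentiableAt 𝕜 (fderiv 𝕜 f) z) (hL : HasFDerivAt (fun w => f' w v) L z) :
    iteratedFDeriv 𝕜 2 f z ![u, v] = L u := by
  have hD : HasFDerivAt (fun w => fderiv 𝕜 f w v)
      ((ContinuousLinearMap.apply 𝕜 F v).comp (fderiv 𝕜 (fderiv 𝕜 f) z)) z :=
    (ContinuousLinearMap.apply 𝕜 F v).hasFDerivAt.comp z hf₂.hasFDerivAt
  have hL' : HasFDerivAt (fun w => fderiv 𝕜 f w v) L z :=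
    hL.congr_of_eventuallyEq (hf.mono fun w hw => by simp only [hw.fderiv])
  rw [iteratedFDeriv_two_apply]
  exact congrArg (· u) (hD.unique hL')

end SecondDerivative

section LogOneSubNormSqDiv

open ContinuousLinearMap

variable {E : Type*} [NormedAddCommGroup E] [InnerProductSpace ℝ E] {r : ℝ} {z : E}

theorem hasFDerivAt_one_sub_norm_sq_div (r : ℝ) (z : E) :
    HasFDerivAt (fun w : E => 1 - ‖w‖ ^ 2 / r ^ 2) (-(2 / r ^ 2) • innerSL ℝ z) z := by
  simp only [div_eq_mul_inv]
  refine (((hasStrictFDerivAt_norm_sq z).hasFDerivAt.mul_const (r ^ 2)⁻¹).const_sub 1).congr_fderiv ?_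
  ext
  simp only [neg_apply, smul_apply, coe_innerSL_apply, nsmul_eq_mul, smul_eq_mul, neg_smul]
  ring

theorem hasFDerivAt_log_one_sub_norm_sq_div (hz : 1 - ‖z‖ ^ 2 / r ^ 2 ≠ 0) :
    HasFDerivAt (fun w : E => log (1 - ‖w‖ ^ 2 / r ^ 2))
      ((-(2 / r ^ 2) * (1 - ‖z‖ ^ 2 / r ^ 2)⁻¹) • innerSL ℝ z) z := by
  refine ((hasFDerivAt_one_sub_norm_sq_div r z).log hz).congr_fderiv ?_
  ext
  simp only [neg_apply, smul_apply, coe_innerSL_apply, smul_eq_mul, neg_mul, neg_smul]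
  ring

theorem contDiffAt_log_one_sub_norm_sq_div (hz : 1 - ‖z‖ ^ 2 / r ^ 2 ≠ 0) :
    ContDiffAt ℝ 2 (fun w : E => log (1 - ‖w‖ ^ 2 / r ^ 2)) z :=
  (contDiffAt_const.sub ((contDiff_norm_sq ℝ).contDiffAt.div_const _)).log hz

theorem iteratedFDeriv_two_log_one_sub_norm_sq_div (hr : r ≠ 0)
    (hz : 1 - ‖z‖ ^ 2 / r ^ 2 ≠ 0) (u v : E) :
    iteratedFDeriv ℝ 2 (fun w : E => log (1 - ‖w‖ ^ 2 / r ^ 2)) z ![u, v] =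
      -2 * inner ℝ u v / (r ^ 2 * (1 - ‖z‖ ^ 2 / r ^ 2))
        - 4 * inner ℝ z u * inner ℝ z v / (r ^ 4 * (1 - ‖z‖ ^ 2 / r ^ 2) ^ 2) := by
  have hz_nhds : ∀ᶠ w in 𝓝 z, 1 - ‖w‖ ^ 2 / r ^ 2 ≠ 0 :=
    (hasFDerivAt_one_sub_norm_sq_div r z).continuousAt.eventually_ne hz
  have hinv := (hasDerivAt_inv hz).comp_hasFDerivAt z (hasFDerivAt_one_sub_norm_sq_div r z)
  have hL := (hinv.const_mul (-(2 / r ^ 2))).mul ((innerSL ℝ v).hasFDerivAt (x := z))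
  rw [iteratedFDeriv_two_apply_of_hasFDerivAt
    (hz_nhds.mono fun w hw => hasFDerivAt_log_one_sub_norm_sq_div hw)
    ((contDiffAt_log_one_sub_norm_sq_div hz).fderiv_right le_rfl |>.differentiableAt one_ne_zero)
    (hL.congr_of_eventuallyEq (.of_forall fun w => by simp [real_inner_comm]))]
  simp only [Function.comp_apply, neg_mul, neg_smul, coe_innerSL_apply, real_inner_comm, smul_neg,
    neg_neg, add_apply, neg_apply, smul_apply, smul_eq_mul]
  field_simp
  ring

end LogOneSubNormSqDiv

section Coordinates

variable {ι : Type*} [Fintype ι]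

theorem EuclideanSpace.real_inner_single_one_right [DecidableEq ι] (z : EuclideanSpace ℂ ι)
    (j : ι) : inner ℝ z (EuclideanSpace.single j (1 : ℂ)) = (z j).re := by
  simp [PiLp.inner_apply, Complex.inner, apply_ite Complex.re]

theorem EuclideanSpace.real_inner_single_I_right [DecidableEq ι] (z : EuclideanSpace ℂ ι)
    (j : ι) : inner ℝ z (EuclideanSpace.single j Complex.I) = (z j).im := by
  simp [PiLp.inner_apply, Complex.inner, apply_ite Complex.re]

theorem EuclideanSpace.sum_re_sq_add_im_sq (z : EuclideanSpace ℂ ι) :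
    ∑ j, ((z j).re ^ 2 + (z j).im ^ 2) = ‖z‖ ^ 2 := by
  rw [EuclideanSpace.norm_sq_eq]
  congr with j
  rw [Complex.sq_norm, Complex.normSq_apply]
  ring

end Coordinates

theorem lapE_log_one_sub_norm_sq_div {n : ℕ} {r : ℝ} {z : EuclideanSpace ℂ (Fin n)} (hr : r ≠ 0)
    (hz : 1 - ‖z‖ ^ 2 / r ^ 2 ≠ 0) :
    lapE n (fun w => log (1 - ‖w‖ ^ 2 / r ^ 2)) z =
      -4 * n / (r ^ 2 * (1 - ‖z‖ ^ 2 / r ^ 2))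
        - 4 * ‖z‖ ^ 2 / (r ^ 4 * (1 - ‖z‖ ^ 2 / r ^ 2) ^ 2) := by
  set q := 1 - ‖z‖ ^ 2 / r ^ 2
  simp only [lapE, iteratedFDeriv_two_log_one_sub_norm_sq_div hr hz, real_inner_self_eq_norm_sq,
    PiLp.norm_single, norm_one, Complex.norm_I, one_pow,
    EuclideanSpace.real_inner_single_one_right, EuclideanSpace.real_inner_single_I_right]
  rw [Finset.sum_congr rfl (g := fun j => -4 / (r ^ 2 * q)
      - 4 * ((z j).re ^ 2 + (z j).im ^ 2) / (r ^ 4 * q ^ 2)) (fun j _ => by ring),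
    Finset.sum_sub_distrib, ← EuclideanSpace.sum_re_sq_add_im_sq, Finset.mul_sum, Finset.sum_div]
  simp only [Finset.sum_const, Finset.card_univ, Fintype.card_fin, nsmul_eq_mul]
  ring

theorem lap_log_one_sub_sq_ge_general (n : ℕ) (r : ℝ)
    (z : EuclideanSpace ℂ (Fin n)) (hz : ‖z‖ < r) :
    -(4 * (n + 1)) / (r ^ 2 * (1 - ‖z‖ ^ 2 / r ^ 2) ^ 2)
      ≤ lapE n (fun w => Real.log (1 - ‖w‖ ^ 2 / r ^ 2)) z := by
  have hr : 0 < r := (norm_nonneg z).trans_lt hz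
  have hq_pos : 0 < 1 - ‖z‖ ^ 2 / r ^ 2 := by
    rw [sub_pos, div_lt_one (by positivity)]
    exact pow_lt_pow_left₀ hz (norm_nonneg z) two_ne_zero
  rw [lapE_log_one_sub_norm_sq_div hr.ne' hq_pos.ne']
  set q := 1 - ‖z‖ ^ 2 / r ^ 2 with hq
  have hz_sq : ‖z‖ ^ 2 = r ^ 2 * (1 - q) := by rw [hq]; field_simp; ring
  calc -(4 * (n + 1)) / (r ^ 2 * q ^ 2) ≤ -(4 * (n * q + (1 - q))) / (r ^ 2 * q ^ 2) := by
        gcongr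
        · exact mul_le_of_le_one_right n.cast_nonneg (sub_le_self 1 (by positivity))
        · exact sub_le_self 1 hq_pos.le
    _ = -4 * n / (r ^ 2 * q) - 4 * ‖z‖ ^ 2 / (r ^ 4 * q ^ 2) := by
        rw [hz_sq]; field_simp; ring

/-- Inequality (12): for `‖z‖ < r`, the Laplacian of `w ↦ log(1 − ‖w‖²/r²)` at `z` is at
least `−4(n+1)/(r²(1 − ‖z‖²/r²)²)`. -/
theorem lap_log_one_sub_sq_ge (n : ℕ) (hn : 1 ≤ n) (r : ℝ) (hr : 0 < r)
    (z : EuclideanSpace ℂ (Fin n)) (hz : ‖z‖ < r) :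
    -(4 * (n + 1)) / (r ^ 2 * (1 - ‖z‖ ^ 2 / r ^ 2) ^ 2)
      ≤ lapE n (fun w => Real.log (1 - ‖w‖ ^ 2 / r ^ 2)) z :=
  lap_log_one_sub_sq_ge_general n r z hz
end

section
/- Let F : [1,∞) → ℝ be a nondecreasing differentiable function with F(1) ≥ 1. Then for every δ > 0 there exists a measurable set E ⊆ [1,∞) with ∫_E (1/t) dt < ∞ such that for every r ∈ [1,∞) \ E one has r · F′(r) ≤ F(r)^{1+δ}. -/
/-!
Put `G = -F^{-δ}`. It is nondecreasing and bounded above by `0` on `[1, ∞)`, so its derivative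
`G' = δ F' / F^{1+δ}` is integrable there. Where `r F'(r) > F(r)^{1+δ}` we have
`1/r < G'(r)/δ`, so the exceptional set has finite logarithmic measure.
-/

open MeasureTheory Set Filter Topology

lemma MonotoneOn.deriv_nonneg_of_differentiableAt {g : ℝ → ℝ} {s : Set ℝ} {x : ℝ}
    (hg : MonotoneOn g s) (hs : UniqueDiffWithinAt ℝ s x) (hd : DifferentiableAt ℝ g x) :
    0 ≤ deriv g x :=
  hd.derivWithin hs ▸ hg.derivWithin_nonneg

lemma MonotoneOn.exists_tendsto_atTop_of_bddAbove {α β : Type*} [LinearOrder α]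
    [ConditionallyCompleteLinearOrder β] [TopologicalSpace β] [OrderTopology β]
    {g : α → β} {a : α} (hg : MonotoneOn g (Ici a)) (hbdd : BddAbove (g '' Ici a)) :
    ∃ l, Tendsto g atTop (𝓝 l) := by
  have hmono : Monotone fun x => g (max x a) := fun x y hxy =>
    hg (le_max_right x a) (le_max_right y a) (max_le_max_right a hxy)
  have hbdd' : BddAbove (range fun x => g (max x a)) :=
    hbdd.mono (range_subset_iff.2 fun x => mem_image_of_mem g (le_max_right x a))
  refine ⟨_, (tendsto_atTop_ciSup hmono hbdd').congr' ?_⟩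
  filter_upwards [eventually_ge_atTop a] with x hx
  rw [max_eq_left hx]

lemma integrableOn_Ioi_deriv_of_monotoneOn {g : ℝ → ℝ} {a : ℝ}
    (hd : ∀ x ∈ Ici a, DifferentiableAt ℝ g x) (hg : MonotoneOn g (Ici a))
    (hbdd : BddAbove (g '' Ici a)) : IntegrableOn (deriv g) (Ioi a) := by
  obtain ⟨l, hl⟩ := hg.exists_tendsto_atTop_of_bddAbove hbdd
  refine integrableOn_Ioi_deriv_of_nonneg' (fun x hx => (hd x hx).hasDerivAt) (fun x hx => ?_) hl
  exact hg.deriv_nonneg_of_differentiableAt (uniqueDiffOn_Ici a x (mem_Ici_of_Ioi hx))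
    (hd x (mem_Ici_of_Ioi hx))

lemma measurableSet_setOf_le_and_lt {α : Type*} [LinearOrder α] [TopologicalSpace α]
    [OrderClosedTopology α] [MeasurableSpace α] [OpensMeasurableSpace α] {f g : α → ℝ} {a : α}
    (hf : ContinuousOn f (Ici a)) (hg : Measurable g) :
    MeasurableSet {r | a ≤ r ∧ f r < g r} := by
  have hf' : Continuous fun r => f (max r a) :=
    hf.comp_continuous (continuous_id.max continuous_const) fun r => le_max_right r a
  have hset : {r | a ≤ r ∧ f r < g r} = Ici a ∩ {r | f (max r a) < g r} := by
    ext r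
    constructor
    · rintro ⟨hr, hlt⟩
      exact ⟨hr, by rwa [mem_ofPred_eq, max_eq_left hr]⟩
    · rintro ⟨hr, hlt⟩
      exact ⟨hr, by rwa [mem_ofPred_eq, max_eq_left (mem_Ici.1 hr)] at hlt⟩
  rw [hset]
  exact measurableSet_Ici.inter (measurableSet_lt hf'.measurable hg)

lemma integrableOn_rpow_neg_mul_deriv {F : ℝ → ℝ} {a δ : ℝ} (hmono : MonotoneOn F (Ici a))
    (hdiff : ∀ r ∈ Ici a, DifferentiableAt ℝ F r) (hpos : ∀ r ∈ Ici a, 0 < F r) (hδ : 0 < δ) :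
    IntegrableOn (fun r => F r ^ (-(1 + δ)) * deriv F r) (Ici a) := by
  set G : ℝ → ℝ := fun t => -F t ^ (-δ)
  have hG : ∀ r ∈ Ici a, HasDerivAt G (δ * (F r ^ (-(1 + δ)) * deriv F r)) r := by
    intro r hr
    rw [show δ * (F r ^ (-(1 + δ)) * deriv F r) = -(deriv F r * -δ * F r ^ (-δ - 1)) by ring_nf]
    exact ((hdiff r hr).hasDerivAt.rpow_const (Or.inl (hpos r hr).ne')).neg
  have hGmono : MonotoneOn G (Ici a) := fun x hx y hy hxy =>
    neg_le_neg (Real.rpow_le_rpow_of_nonpos (hpos x hx) (hmono hx hy hxy) (by linarith))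
  have hGbdd : BddAbove (G '' Ici a) := by
    refine ⟨0, ?_⟩
    rintro _ ⟨t, ht, rfl⟩
    exact neg_nonpos.2 (Real.rpow_nonneg (hpos t ht).le _)
  have hGint : IntegrableOn (fun r => δ⁻¹ * deriv G r) (Ici a) :=
    ((integrableOn_Ici_iff_integrableOn_Ioi).2 (integrableOn_Ioi_deriv_of_monotoneOn
      (fun r hr => (hG r hr).differentiableAt) hGmono hGbdd)).const_mul δ⁻¹
  refine hGint.congr_fun (fun r hr => ?_) measurableSet_Ici
  simp only [(hG r hr).deriv, inv_mul_cancel_left₀ hδ.ne']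

lemma one_div_lt_rpow_neg_mul_of_rpow_lt {x r d p : ℝ} (hx : 0 < x) (hr : 0 < r)
    (h : x ^ p < r * d) : 1 / r < x ^ (-p) * d := by
  rw [Real.rpow_neg hx.le, inv_mul_eq_div, div_lt_div_iff₀ hr (Real.rpow_pos_of_pos hx p)]
  linarith

/-- Borel-type growth lemma: if `F : [1,∞) → ℝ` is nondecreasing, differentiable, with
`F(1) ≥ 1`, then for every `δ > 0` there is a set `E ⊆ [1,∞)` of finite logarithmic measure
(`∫_E dt/t < ∞`) outside of which `r·F′(r) ≤ F(r)^{1+δ}`. -/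
theorem borel_growth_lemma (F : ℝ → ℝ)
    (hmono : MonotoneOn F (Set.Ici 1))
    (hdiff : ∀ r ∈ Set.Ici (1 : ℝ), DifferentiableAt ℝ F r)
    (hF1 : 1 ≤ F 1) (δ : ℝ) (hδ : 0 < δ) :
    ∃ E : Set ℝ, E ⊆ Set.Ici 1 ∧ MeasurableSet E ∧
      IntegrableOn (fun t => 1 / t) E volume ∧
      ∀ r ∈ Set.Ici (1 : ℝ) \ E, r * deriv F r ≤ F r ^ (1 + δ) := by
  have hFpos : ∀ r ∈ Ici (1 : ℝ), 0 < F r := fun r hr =>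
    one_pos.trans_le (hF1.trans (hmono self_mem_Ici hr hr))
  set E := {r : ℝ | 1 ≤ r ∧ F r ^ (1 + δ) < r * deriv F r}
  have hE : MeasurableSet E := by
    have hFc : ContinuousOn F (Ici 1) := fun r hr => (hdiff r hr).continuousAt.continuousWithinAt
    exact measurableSet_setOf_le_and_lt (hFc.rpow_const fun _ _ => Or.inr (by linarith))
      (measurable_id.mul (measurable_deriv F))
  refine ⟨E, fun r hr => hr.1, hE, ?_, fun r ⟨hr, hrE⟩ => not_lt.1 fun hlt => hrE ⟨hr, hlt⟩⟩
  refine ((integrableOn_rpow_neg_mul_deriv hmono hdiff hFpos hδ).mono_set fun r hr => hr.1).mono'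
    (measurable_const.div measurable_id).aestronglyMeasurable ?_
  filter_upwards [ae_restrict_mem hE] with t ⟨ht, hlt⟩
  rw [Real.norm_of_nonneg (one_div_nonneg.2 (zero_le_one.trans ht))]
  exact (one_div_lt_rpow_neg_mul_of_rpow_lt (hFpos t ht) (zero_lt_one.trans_le ht) hlt).le
end
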